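/- arXiv:0706.3734 — 8 statements merged into one kernel-verified Lean document; each statement's English description precedes it below -/
import Mathlib

section
/- For every v ∈ F with v^{r+1} = 1 and every function f : F → ℂ, the operator (P_v f)(x) := −f(v·x) commutes with both Ŝ and T̂: Ŝ(P_v f) = P_v(Ŝ f) and T̂(P_v f) = P_v(T̂ f). (This is the commutation of the U^{(r)}-action with the unfolded SL(2,ℤ)-representation, Section 3.3.) -/
open Complex Finset

/-- For `n ∈ ZMod r`, the complex number `ζ^n = exp(2πi·n̂/r)` where `n̂` is the
canonical lift of `n`. -/
noncomputable def zmodExp (r : ℕ) (n : ZMod r) : ℂ :=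
  Complex.exp (2 * Real.pi * Complex.I * (n.val : ℂ) / (r : ℂ))

/-- The S-matrix of the unfolded SL(2,ℤ)-representation:
`(Ŝf)(x) = ∑_{y ∈ F} ζ^{Tr(x^r·y)}·f(y)`. -/
noncomputable def Shat (r : ℕ) {F : Type*} [Field F] [Fintype F] [Algebra (ZMod r) F]
    (f : F → ℂ) : F → ℂ :=
  fun x => ∑ y : F, zmodExp r (Algebra.trace (ZMod r) F (x ^ r * y)) * f y

/-- The T-matrix of the unfolded SL(2,ℤ)-representation: `(T̂f)(x) = ζ^{−N(x)}·f(x)`. -/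
noncomputable def That (r : ℕ) {F : Type*} [Field F] [Fintype F] [Algebra (ZMod r) F]
    (f : F → ℂ) : F → ℂ :=
  fun x => zmodExp r (-(Algebra.norm (ZMod r) x)) * f x

/-- In a quadratic extension `L` of a finite field with `q` elements the norm is `x ↦ x ^ (q + 1)`. -/
theorem FiniteField.norm_eq_one_of_pow_card_add_one_eq_one {K L : Type*} [Field K] [Field L]
    [Algebra K L] [Finite L] (hcard : Nat.card L = Nat.card K ^ 2) {v : L}
    (hv : v ^ (Nat.card K + 1) = 1) : Algebra.norm K v = 1 := by
  have : Finite K := Finite.of_injective _ (algebraMap K L).injective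
  have hq : 1 < Nat.card K := Finite.one_lt_card
  have hexp : (Nat.card L - 1) / (Nat.card K - 1) = Nat.card K + 1 := by
    refine Nat.div_eq_of_eq_mul_left (by omega) ?_
    rw [hcard, ← Nat.sq_sub_sq, one_pow]
  apply (algebraMap K L).injective
  rw [FiniteField.algebraMap_norm_eq_pow, hexp, hv, map_one]

section

variable {r : ℕ} {F : Type*} [Field F] [Fintype F] [Algebra (ZMod r) F]

theorem Shat_neg (f : F → ℂ) : Shat r (fun x => -f x) = fun x => -Shat r f x := by
  funext x
  simp only [Shat, mul_neg, Finset.sum_neg_distrib]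

theorem That_neg (f : F → ℂ) : That r (fun x => -f x) = fun x => -That r f x := by
  funext x
  simp only [That, mul_neg]

/-- Substituting `y ↦ v * y` in the sum works because `(v x)^r (v y) = v^(r+1) x^r y`. -/
theorem Shat_comp_mul_left {v : F} (hv : v ^ (r + 1) = 1) (f : F → ℂ) :
    Shat r (fun x => f (v * x)) = fun x => Shat r f (v * x) := by
  have hv0 : v ≠ 0 := by
    rintro rfl
    simp at hv
  have hinv : ∀ x y : F, (v * x) ^ r * (v * y) = x ^ r * y := fun x y => by
    rw [mul_pow, mul_mul_mul_comm, ← pow_succ, hv, one_mul]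
  funext x
  exact Fintype.sum_bijective (v * ·) (mulLeft_bijective₀ v hv0) _ _ fun y => by
    simp only [hinv]

theorem That_comp_mul_left {v : F} (hv : Algebra.norm (ZMod r) v = 1) (f : F → ℂ) :
    That r (fun x => f (v * x)) = fun x => That r f (v * x) := by
  funext x
  simp only [That, map_mul, hv, one_mul]

end

theorem stmt0_general (r : ℕ) (hr : r.Prime)
    (F : Type*) [Field F] [Fintype F] [Algebra (ZMod r) F]
    (hcard : Fintype.card F = r ^ 2)
    (v : F) (hv : v ^ (r + 1) = 1) (f : F → ℂ) :
    Shat r (fun x => -f (v * x)) = (fun x => -(Shat r f (v * x))) ∧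
    That r (fun x => -f (v * x)) = (fun x => -(That r f (v * x))) := by
  have : Fact r.Prime := ⟨hr⟩
  have hnorm : Algebra.norm (ZMod r) v = 1 := by
    apply FiniteField.norm_eq_one_of_pow_card_add_one_eq_one
    · rw [Nat.card_zmod, Nat.card_eq_fintype_card, hcard]
    · rwa [Nat.card_zmod]
  constructor
  · rw [Shat_neg (fun x => f (v * x)), Shat_comp_mul_left hv]
  · rw [That_neg (fun x => f (v * x)), That_comp_mul_left hnorm]

/-- For every `v ∈ F` with `v^{r+1} = 1`, the operator `(P_v f)(x) := −f(v·x)` commutes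
with both `Ŝ` and `T̂`. -/
theorem stmt0 (r : ℕ) (hr : r.Prime) (hodd : Odd r) (h3 : r % 3 = 2)
    (F : Type*) [Field F] [Fintype F] [Algebra (ZMod r) F]
    (hcard : Fintype.card F = r ^ 2)
    (v : F) (hv : v ^ (r + 1) = 1) (f : F → ℂ) :
    Shat r (fun x => -f (v * x)) = (fun x => -(Shat r f (v * x))) ∧
    That r (fun x => -f (v * x)) = (fun x => -(That r f (v * x))) :=
  stmt0_general r hr F hcard v hv f
end

section
/- Assume additionally r ≡ 1 (mod 4). For each natural number a with 1 ≤ a ≤ (r−1)/2 define e⁺_a : F → ℂ by e⁺_a(z) = ∑_{j=0}^{r} (−1)^j·𝟙[z = u^j·a] (a viewed in F via the algebra map from ZMod r). Then Ŝ(e⁺_a) = ∑_{b=1}^{(r−1)/2} s(a·b)·e⁺_b and T̂(e⁺_a) = ζ^{−a²}·e⁺_a, where a·b and a² are computed in ZMod r. In particular the span of {e⁺_a : 1 ≤ a ≤ (r−1)/2} is invariant under Ŝ and T̂ (Lemma 3.1 together with Equation (5)). -/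
open Complex Finset

/-- The alternating sum `s(m) = ∑_{j=0}^{r} (−1)^j·ζ^{m·Tr(u^j)}`. -/
noncomputable def sSum (r : ℕ) {F : Type*} [Field F] [Fintype F] [Algebra (ZMod r) F]
    (u : F) (m : ZMod r) : ℂ :=
  ∑ j ∈ Finset.range (r + 1), (-1 : ℂ) ^ j * zmodExp r (m * Algebra.trace (ZMod r) F (u ^ j))

open scoped Classical

/-- The basis vector `e⁺_a(z) = ∑_{j=0}^{r} (−1)^j·𝟙[z = u^j·a]`. -/
noncomputable def ePlus (r : ℕ) {F : Type*} [Field F] [Fintype F] [Algebra (ZMod r) F]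
    (u : F) (a : ℕ) : F → ℂ :=
  fun z => ∑ j ∈ Finset.range (r + 1),
    (-1 : ℂ) ^ j * (if z = u ^ j * algebraMap (ZMod r) F (a : ZMod r) then 1 else 0)

/-!
Put `g(c) = ∑_{j ≤ r} (-1)^j ζ^{Tr(c u^j)}` (`altTraceSum`), so that `(Ŝ e⁺_a)(x) = g(x^r a)` and
`s(m) = g(m)`; as `r + 1` is even, `g(c u^k) = (-1)^k g(c)`.
For `x ≠ 0`, `x^{r-1}` has norm one, so `x^r = x u^t` for some `t`. If `t` is even, `x u^{t/2}` is
fixed by Frobenius, and since `u^{(r+1)/2} = -1` we get `x = u^k b` with `1 ≤ b ≤ (r-1)/2`; here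
`k < r + 1` and `b` are unique because `N(u^k b) = b²`, and both sides equal `(-1)^k s(ab)`.
If `t` is odd (which covers `x = 0` with `t = 1`), no `e⁺_b` is supported at `x`, and `c = x^r a`
satisfies `c^r = c u^{t'}` with `t'` odd; then `j ↦ t' - j (mod r + 1)` pairs `c u^j` with its
Frobenius conjugate, which has the same trace, and flips the sign `(-1)^j`, so `g(c) = 0`.
The `T̂` part is the identity `N(u^j a) = a²`.
-/

theorem sum_range_add_of_periodic {M : Type*} [AddCommGroup M] {f : ℕ → M} {n : ℕ}
    (hf : Function.Periodic f n) (s : ℕ) :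
    ∑ j ∈ range n, f (j + s) = ∑ j ∈ range n, f j := by
  induction s with
  | zero => rfl
  | succ s ih =>
    have h := sum_range_succ' (fun j => f (j + s)) n
    rw [sum_range_succ, zero_add, add_comm n, hf s] at h
    calc ∑ j ∈ range n, f (j + (s + 1)) = ∑ j ∈ range n, f (j + 1 + s) := by
          simp only [add_comm s 1, add_assoc]
      _ = ∑ j ∈ range n, f j := (add_right_cancel h).symm.trans ih

theorem pow_char_pow_char {r : ℕ} {F : Type*} [Field F] [Fintype F]
    (hcard : Fintype.card F = r ^ 2) (x : F) : (x ^ r) ^ r = x := by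
  rw [← pow_mul, ← sq, ← hcard, FiniteField.pow_card]

section FiniteField

variable {r : ℕ} [Fact r.Prime] {F : Type*} [Field F] [Algebra (ZMod r) F]

theorem trace_pow_char [Finite F] (x : F) :
    Algebra.trace (ZMod r) F (x ^ r) = Algebra.trace (ZMod r) F x := by
  simpa [FiniteField.coe_frobeniusAlgEquivOfAlgebraic, ZMod.card] using
    Algebra.trace_eq_of_algEquiv (FiniteField.frobeniusAlgEquivOfAlgebraic (ZMod r) F) x

theorem algebraMap_pow_char (m : ZMod r) :
    algebraMap (ZMod r) F m ^ r = algebraMap (ZMod r) F m := by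
  rw [← map_pow, ZMod.pow_card]

theorem exists_algebraMap_eq_of_pow_char_eq_self {x : F} (hx : x ^ r = x) :
    ∃ m : ZMod r, algebraMap (ZMod r) F m = x := by
  have : CharP F r := charP_of_injective_algebraMap (algebraMap (ZMod r) F).injective r
  obtain ⟨n, rfl⟩ := (mem_bot_iff_intCast r F).mp ((Subfield.mem_bot_iff_pow_eq_self F r).mpr hx)
  exact ⟨n, map_intCast _ n⟩

variable [Fintype F]

theorem algebraMap_norm_eq_pow_char_add_one (hcard : Fintype.card F = r ^ 2) (x : F) :
    algebraMap (ZMod r) F (Algebra.norm (ZMod r) x) = x ^ (r + 1) := by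
  have hr : 1 < r := (Fact.out : r.Prime).one_lt
  rw [FiniteField.algebraMap_norm_eq_pow, Nat.card_eq_fintype_card, hcard, Nat.card_zmod]
  congr 1
  refine Nat.div_eq_of_eq_mul_left (by omega) ?_
  zify [hr.le, Nat.one_le_pow 2 r (by omega)]
  ring

theorem norm_pow_mul_algebraMap (hcard : Fintype.card F = r ^ 2) {u : F} (hu : u ^ (r + 1) = 1)
    (j : ℕ) (m : ZMod r) : Algebra.norm (ZMod r) (u ^ j * algebraMap (ZMod r) F m) = m ^ 2 := by
  apply (algebraMap (ZMod r) F).injective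
  rw [algebraMap_norm_eq_pow_char_add_one hcard, mul_pow, ← pow_mul, mul_comm j, pow_mul, hu,
    one_pow, one_mul, pow_succ, algebraMap_pow_char, map_pow, sq]

end FiniteField

theorem periodic_neg_one_pow_mul {M R : Type*} [Monoid M] [Ring R] {n : ℕ} (hn : Even n) {u : M}
    (hu : u ^ n = 1) (g : M → R) (c : M) :
    Function.Periodic (fun j : ℕ => (-1 : R) ^ j * g (c * u ^ j)) n := by
  intro j
  simp only [pow_add, hu, mul_one, hn.neg_one_pow]

noncomputable def altTraceSum (r : ℕ) {F : Type*} [Field F] [Algebra (ZMod r) F] (u c : F) : ℂ :=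
  ∑ j ∈ range (r + 1), (-1 : ℂ) ^ j * zmodExp r (Algebra.trace (ZMod r) F (c * u ^ j))

section AltTraceSum

variable {r : ℕ} {F : Type*} [Field F] [Algebra (ZMod r) F] {u : F}

theorem altTraceSum_mul_pow (hodd : Odd r) (hu : u ^ (r + 1) = 1) (c : F) (k : ℕ) :
    altTraceSum r u (c * u ^ k) = (-1) ^ k * altTraceSum r u c := by
  rw [altTraceSum, altTraceSum, ← sum_range_add_of_periodic (periodic_neg_one_pow_mul hodd.add_one
    hu (fun y => zmodExp r (Algebra.trace (ZMod r) F y)) c) k, mul_sum]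
  refine sum_congr rfl fun j _ => ?_
  rw [mul_assoc c, ← pow_add, add_comm k j, pow_add (-1 : ℂ) j k]
  conv_rhs => rw [mul_comm ((-1 : ℂ) ^ j), mul_assoc, ← mul_assoc ((-1 : ℂ) ^ k), ← pow_add,
    Even.neg_one_pow ⟨k, rfl⟩, one_mul]

theorem altTraceSum_eq_zero_of_pow_char_eq [Fact r.Prime] [Finite F] (hodd : Odd r)
    (hu : u ^ (r + 1) = 1) {c : F} {t : ℕ} (ht : Odd t) (hc : c ^ r = c * u ^ t) :
    altTraceSum r u c = 0 := by
  set f := fun j : ℕ => (-1 : ℂ) ^ j * zmodExp r (Algebra.trace (ZMod r) F (c * u ^ j))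
  have hu0 : u ≠ 0 := by rintro rfl; simp at hu
  -- The index is `t - j` modulo `r + 1`, written as a reflection followed by a shift.
  have hflip : ∀ j ∈ range (r + 1), f (r + 1 - 1 - j + (t + 1)) = -f j := by
    intro j hj
    have hj : j < r + 1 := mem_range.mp hj
    have hexp : r + 1 - 1 - j + (t + 1) + j = t + (r + 1) := by omega
    have hfrob : c * u ^ (r + 1 - 1 - j + (t + 1)) = (c * u ^ j) ^ r := by
      refine mul_right_cancel₀ (pow_ne_zero j hu0) ?_
      rw [mul_assoc, ← pow_add, hexp, pow_add, hu, mul_one, ← hc, mul_pow, mul_assoc, ← pow_mul,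
        ← pow_add, ← mul_add_one, pow_mul', hu, one_pow, mul_one]
    have hsign : (-1 : ℂ) ^ (r + 1 - 1 - j + (t + 1)) = -(-1) ^ j := by
      have h : (-1 : ℂ) ^ (r + 1 - 1 - j + (t + 1)) * (-1) ^ j = -1 := by
        rw [← pow_add, hexp, pow_add, ht.neg_one_pow, hodd.add_one.neg_one_pow, mul_one]
      have h2 : (-1 : ℂ) ^ j * (-1) ^ j = 1 := by rw [← pow_add]; exact Even.neg_one_pow ⟨j, rfl⟩
      linear_combination (-1 : ℂ) ^ j * h - (-1 : ℂ) ^ (r + 1 - 1 - j + (t + 1)) * h2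
    simp only [f]
    rw [hfrob, trace_pow_char, hsign, neg_mul]
  have hf : Function.Periodic f (r + 1) := periodic_neg_one_pow_mul hodd.add_one hu
    (fun y => zmodExp r (Algebra.trace (ZMod r) F y)) c
  have hsum : ∑ j ∈ range (r + 1), f j = -∑ j ∈ range (r + 1), f j :=
    calc ∑ j ∈ range (r + 1), f j = ∑ j ∈ range (r + 1), f (j + (t + 1)) :=
          (sum_range_add_of_periodic hf _).symm
      _ = ∑ j ∈ range (r + 1), f (r + 1 - 1 - j + (t + 1)) := (sum_range_reflect _ _).symm
      _ = -∑ j ∈ range (r + 1), f j := by rw [sum_congr rfl hflip, sum_neg_distrib]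
  exact self_eq_neg.mp hsum

end AltTraceSum

theorem natCast_ne_zero_of_mem_Icc {r : ℕ} {b : ℕ} (hb : b ∈ Icc 1 ((r - 1) / 2)) :
    (b : ZMod r) ≠ 0 := by
  rw [mem_Icc] at hb
  rw [ne_eq, ZMod.natCast_eq_zero_iff]
  exact fun hdvd => absurd (Nat.le_of_dvd (by omega) hdvd) (by omega)

theorem eq_of_natCast_sq_eq {r : ℕ} [Fact r.Prime] {b b' : ℕ} (hb : b ∈ Icc 1 ((r - 1) / 2))
    (hb' : b' ∈ Icc 1 ((r - 1) / 2)) (h : (b : ZMod r) ^ 2 = (b' : ZMod r) ^ 2) : b = b' := by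
  have hr : 1 < r := (Fact.out : r.Prime).one_lt
  rw [mem_Icc] at hb hb'
  rcases sq_eq_sq_iff_eq_or_eq_neg.mp h with h | h
  · rw [ZMod.natCast_eq_natCast_iff', Nat.mod_eq_of_lt (by omega), Nat.mod_eq_of_lt (by omega)] at h
    exact h
  · rw [eq_neg_iff_add_eq_zero, ← Nat.cast_add, ZMod.natCast_eq_zero_iff] at h
    exact absurd (Nat.le_of_dvd (by omega) h) (by omega)

theorem exists_pow_mul_natCast_mem_Icc {r : ℕ} [Fact r.Prime] {F : Type*} [Field F]
    [Algebra (ZMod r) F] {u : F} (hu : IsPrimitiveRoot u (r + 1)) (hodd : Odd r) (k : ℕ)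
    {d : ZMod r} (hd : d ≠ 0) : ∃ k' < r + 1, ∃ b ∈ Icc 1 ((r - 1) / 2),
      u ^ k * algebraMap (ZMod r) F d = u ^ k' * algebraMap (ZMod r) F b := by
  have hr : 1 < r := (Fact.out : r.Prime).one_lt
  have hneg : u ^ ((r + 1) / 2) = -1 :=
    (hu.pow (by omega) (Nat.div_mul_cancel (even_iff_two_dvd.mp hodd.add_one)).symm
      ).eq_neg_one_of_two_right
  have hmod : ∀ n, u ^ (n % (r + 1)) = u ^ n := fun n => by rw [hu.eq_orderOf, pow_mod_orderOf]
  have hb : d.valMinAbs.natAbs ∈ Icc 1 ((r - 1) / 2) :=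
    mem_Icc.mpr ⟨Int.natAbs_pos.mpr ((ZMod.valMinAbs_eq_zero d).not.mpr hd),
      (ZMod.natAbs_valMinAbs_le d).trans (by have := Nat.odd_iff.mp hodd; omega)⟩
  have hcast := ZMod.natCast_natAbs_valMinAbs d
  split_ifs at hcast
  · exact ⟨k % (r + 1), Nat.mod_lt _ (by omega), _, hb, by rw [hmod, hcast]⟩
  · refine ⟨(k + (r + 1) / 2) % (r + 1), Nat.mod_lt _ (by omega), _, hb, ?_⟩
    rw [hmod, hcast, pow_add, hneg, map_neg]
    ring

section ePlus

variable {r : ℕ} {F : Type*} [Field F] [Fintype F] [Algebra (ZMod r) F] {u : F}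

theorem sSum_eq_altTraceSum (m : ZMod r) :
    sSum r u m = altTraceSum r u (algebraMap (ZMod r) F m) := by
  refine sum_congr rfl fun j _ => ?_
  rw [← Algebra.smul_def, map_smul, smul_eq_mul]

theorem Shat_ePlus_apply (a : ℕ) (x : F) :
    Shat r (ePlus r u a) x = altTraceSum r u (x ^ r * algebraMap (ZMod r) F a) := by
  simp only [Shat, ePlus, altTraceSum, mul_sum]
  rw [sum_comm]
  refine sum_congr rfl fun j _ => ?_
  simp only [mul_ite, mul_one, mul_zero, sum_ite_eq', mem_univ, if_true]
  rw [mul_comm]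
  congr 3
  ring

variable [Fact r.Prime]

theorem That_ePlus (hcard : Fintype.card F = r ^ 2) (hu : u ^ (r + 1) = 1) (a : ℕ) :
    That r (ePlus r u a) = fun z => zmodExp r (-((a : ZMod r) ^ 2)) * ePlus r u a z := by
  funext z
  simp only [That, ePlus, mul_sum]
  refine sum_congr rfl fun j _ => ?_
  split_ifs with h
  · rw [h, norm_pow_mul_algebraMap hcard hu]
  · simp

theorem eq_and_eq_of_pow_mul_algebraMap_eq (hcard : Fintype.card F = r ^ 2)
    (hu : IsPrimitiveRoot u (r + 1)) {k k' b b' : ℕ} (hk : k < r + 1) (hk' : k' < r + 1)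
    (hb : b ∈ Icc 1 ((r - 1) / 2)) (hb' : b' ∈ Icc 1 ((r - 1) / 2))
    (h : u ^ k * algebraMap (ZMod r) F b = u ^ k' * algebraMap (ZMod r) F b') :
    k = k' ∧ b = b' := by
  have hbb' : b = b' := eq_of_natCast_sq_eq hb hb' <| by
    simpa only [norm_pow_mul_algebraMap hcard hu.pow_eq_one] using
      congrArg (Algebra.norm (ZMod r)) h
  subst hbb'
  refine ⟨hu.pow_inj hk hk' (mul_right_cancel₀ ?_ h), rfl⟩
  exact (map_ne_zero_iff _ (algebraMap (ZMod r) F).injective).mpr (natCast_ne_zero_of_mem_Icc hb)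

theorem ePlus_pow_mul_algebraMap (hcard : Fintype.card F = r ^ 2)
    (hu : IsPrimitiveRoot u (r + 1)) {k b b' : ℕ} (hk : k < r + 1)
    (hb : b ∈ Icc 1 ((r - 1) / 2)) (hb' : b' ∈ Icc 1 ((r - 1) / 2)) :
    ePlus r u b' (u ^ k * algebraMap (ZMod r) F b) = if b' = b then (-1) ^ k else 0 := by
  have hiff : ∀ j ∈ range (r + 1),
      (u ^ k * algebraMap (ZMod r) F b = u ^ j * algebraMap (ZMod r) F b') ↔ (k = j ∧ b = b') :=
    fun j hj => ⟨eq_and_eq_of_pow_mul_algebraMap_eq hcard hu hk (mem_range.mp hj) hb hb',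
      by rintro ⟨rfl, rfl⟩; rfl⟩
  simp only [ePlus]
  rw [sum_congr rfl fun j hj => by rw [if_congr (hiff j hj) rfl rfl]]
  split_ifs with hbb'
  · simp [hbb', hk]
  · simp [Ne.symm hbb']

theorem ePlus_eq_zero_of_pow_char_eq (hu : IsPrimitiveRoot u (r + 1)) (hodd : Odd r) {x : F}
    {t : ℕ} (ht : Odd t) (hx : x ^ r = x * u ^ t) {b : ℕ} (hb : (b : ZMod r) ≠ 0) :
    ePlus r u b x = 0 := by
  refine sum_eq_zero fun j _ => ?_
  rw [if_neg, mul_zero]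
  rintro rfl
  have hβ : algebraMap (ZMod r) F b ≠ 0 := (map_ne_zero_iff _ (algebraMap _ F).injective).mpr hb
  rw [mul_pow, ← pow_mul, algebraMap_pow_char, mul_right_comm] at hx
  have hjr : u ^ (j * r) = u ^ (j + t) := by rw [mul_right_cancel₀ hβ hx, pow_add]
  have hone : u ^ (2 * j + t) = 1 := by
    rw [two_mul, add_assoc, pow_add, ← hjr, ← pow_add, ← mul_one_add, add_comm 1, pow_mul',
      hu.pow_eq_one, one_pow]
  obtain ⟨s, rfl⟩ := ht
  obtain ⟨m, rfl⟩ := hodd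
  have h2 : 2 ∣ 2 * j + (2 * s + 1) :=
    (Dvd.intro (m + 1) (by ring)).trans (hu.dvd_of_pow_eq_one _ hone)
  omega

theorem exists_eq_pow_mul_natCast_or_pow_char_eq (hcard : Fintype.card F = r ^ 2)
    (hu : IsPrimitiveRoot u (r + 1)) (hodd : Odd r) (x : F) :
    (∃ k < r + 1, ∃ b ∈ Icc 1 ((r - 1) / 2), x = u ^ k * algebraMap (ZMod r) F b) ∨
      ∃ t, Odd t ∧ x ^ r = x * u ^ t := by
  have hr : 1 < r := (Fact.out : r.Prime).one_lt
  by_cases hx0 : x = 0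
  · exact .inr ⟨1, odd_one, by rw [hx0, zero_pow (by omega), zero_mul]⟩
  have hw : (x ^ (r - 1)) ^ (r + 1) = 1 := by
    refine mul_right_cancel₀ hx0 ?_
    rw [← pow_mul, ← pow_succ, one_mul, show (r - 1) * (r + 1) + 1 = r * r by
      zify [hr.le]; ring, pow_mul, pow_char_pow_char hcard]
  obtain ⟨t, -, ht⟩ := hu.eq_pow_of_pow_eq_one hw
  have hxr : x ^ r = x * u ^ t := by rw [ht, ← pow_succ', Nat.sub_add_cancel hr.le]
  rcases Nat.even_or_odd t with ⟨s, rfl⟩ | hto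
  · have hy : (x * u ^ s) ^ r = x * u ^ s := by
      rw [mul_pow, hxr, ← pow_mul, mul_assoc, ← pow_add, show s + s + s * r =
        s + s * (r + 1) by ring, pow_add, pow_mul', hu.pow_eq_one, one_pow, mul_one]
    obtain ⟨d, hd⟩ := exists_algebraMap_eq_of_pow_char_eq_self hy
    have hd0 : d ≠ 0 := by
      rintro rfl
      exact mul_ne_zero hx0 (pow_ne_zero s (hu.ne_zero (by omega))) (by rw [← hd, map_zero])
    obtain ⟨k, hk, b, hb, hkb⟩ := exists_pow_mul_natCast_mem_Icc hu hodd (s * r) hd0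
    refine .inl ⟨k, hk, b, hb, ?_⟩
    rw [← hkb, hd, mul_left_comm, ← pow_add, show s * r + s = s * (r + 1) by ring, pow_mul',
      hu.pow_eq_one, one_pow, mul_one]
  · exact .inr ⟨t, hto, hxr⟩

end ePlus

theorem stmt2_general (r : ℕ) (hr : r.Prime) (hodd : Odd r)
    (F : Type*) [Field F] [Fintype F] [Algebra (ZMod r) F]
    (hcard : Fintype.card F = r ^ 2)
    (u : F) (hu : orderOf u = r + 1)
    (a : ℕ) :
    Shat r (ePlus r u a) =
      (fun z => ∑ b ∈ Finset.Icc 1 ((r - 1) / 2),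
        sSum r u ((a : ZMod r) * (b : ZMod r)) * ePlus r u b z) ∧
    That r (ePlus r u a) = (fun z => zmodExp r (-((a : ZMod r) ^ 2)) * ePlus r u a z) := by
  have : Fact r.Prime := ⟨hr⟩
  have hu' : IsPrimitiveRoot u (r + 1) := hu ▸ IsPrimitiveRoot.orderOf u
  refine ⟨funext fun x => ?_, That_ePlus hcard hu'.pow_eq_one a⟩
  rw [Shat_ePlus_apply]
  rcases exists_eq_pow_mul_natCast_or_pow_char_eq hcard hu' hodd x with
    ⟨k, hk, b, hb, rfl⟩ | ⟨t, ht, hx⟩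
  · have hxr : (u ^ k * algebraMap (ZMod r) F b) ^ r * algebraMap (ZMod r) F a =
        algebraMap (ZMod r) F (a * b) * u ^ (k * r) := by
      rw [mul_pow, ← pow_mul, algebraMap_pow_char, map_mul]
      ring
    rw [hxr, altTraceSum_mul_pow hodd hu'.pow_eq_one, ← sSum_eq_altTraceSum,
      sum_eq_single_of_mem b hb fun b' hb' hne => by
        rw [ePlus_pow_mul_algebraMap hcard hu' hk hb hb', if_neg hne, mul_zero],
      ePlus_pow_mul_algebraMap hcard hu' hk hb hb, if_pos rfl, mul_comm k, pow_mul,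
      hodd.neg_one_pow, mul_comm]
  · have hc : (x ^ r * algebraMap (ZMod r) F a) ^ r =
        x ^ r * algebraMap (ZMod r) F a * u ^ (t * r) := by
      rw [mul_pow, pow_char_pow_char hcard, algebraMap_pow_char, mul_right_comm, pow_mul,
        ← mul_pow, ← hx, pow_char_pow_char hcard]
    rw [altTraceSum_eq_zero_of_pow_char_eq hodd hu'.pow_eq_one (ht.mul hodd) hc]
    exact (sum_eq_zero fun b hb => by
      rw [ePlus_eq_zero_of_pow_char_eq hu' hodd ht hx (natCast_ne_zero_of_mem_Icc hb),
        mul_zero]).symm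

/-- Lemma 3.1 together with Equation (5): for `r ≡ 1 (mod 4)`,
`Ŝ(e⁺_a) = ∑_b s(a·b)·e⁺_b` and `T̂(e⁺_a) = ζ^{−a²}·e⁺_a`. -/
theorem stmt2 (r : ℕ) (hr : r.Prime) (hodd : Odd r) (h3 : r % 3 = 2) (h4 : r % 4 = 1)
    (F : Type*) [Field F] [Fintype F] [Algebra (ZMod r) F]
    (hcard : Fintype.card F = r ^ 2)
    (u : F) (hu : orderOf u = r + 1)
    (a : ℕ) (ha1 : 1 ≤ a) (ha2 : a ≤ (r - 1) / 2) :
    Shat r (ePlus r u a) =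
      (fun z => ∑ b ∈ Finset.Icc 1 ((r - 1) / 2),
        sSum r u ((a : ZMod r) * (b : ZMod r)) * ePlus r u b z) ∧
    That r (ePlus r u a) = (fun z => zmodExp r (-((a : ZMod r) ^ 2)) * ePlus r u a z) :=
  stmt2_general r hr hodd F hcard u hu a
end

section
/- For every m ∈ ZMod r: if r ≡ 1 (mod 4) then the complex conjugate of s(m) equals −s(m) (s(m) is purely imaginary), and if r ≡ 3 (mod 4) then the complex conjugate of s(m) equals s(m) (s(m) is real). -/
open Complex Finset

/-! The sum `s(m)` runs over a full period of its summand `j ↦ (-1)^j ζ^{m Tr(u^j)}`. Since `u`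
has order `r + 1 = 2k`, `u^k = -1`, so complex conjugation maps the summand to `(-1)^k` times
its shift by `k`. Hence `conj s(m) = (-1)^k s(m)`, and `k` is odd iff `r ≡ 1 (mod 4)`. -/

theorem Function.Periodic.sum_range_comp_add_right {M : Type*} [AddCommMonoid M] {f : ℕ → M}
    {n : ℕ} (hf : Function.Periodic f n) (k : ℕ) :
    ∑ j ∈ range n, f (j + k) = ∑ j ∈ range n, f j := by
  calc ∑ j ∈ range n, f (j + k) = ∑ j ∈ Ico k (k + n), f (j % n) := by
        rw [sum_Ico_eq_sum_range, Nat.add_sub_cancel_left]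
        simp only [hf.map_mod_nat, add_comm]
  _ = (((Multiset.Ico k (k + n)).map (· % n)).map f).sum := by
        rw [Multiset.map_map]; rfl
  _ = ∑ j ∈ range n, f j := by rw [Nat.multiset_Ico_map_mod]; rfl

theorem pow_eq_neg_one_of_orderOf_eq_two_mul {R : Type*} [CommRing R] [NoZeroDivisors R]
    {u : R} {k : ℕ} (hk : k ≠ 0) (hu : orderOf u = 2 * k) : u ^ k = -1 := by
  have := (IsPrimitiveRoot.orderOf u).pow_of_dvd hk (hu ▸ dvd_mul_left k 2)
  rw [hu, Nat.mul_div_cancel _ (Nat.pos_of_ne_zero hk)] at this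
  exact this.eq_neg_one_of_two_right

theorem zmodExp_eq_stdAddChar {r : ℕ} [NeZero r] (n : ZMod r) :
    zmodExp r n = ZMod.stdAddChar n := by
  rw [ZMod.stdAddChar_apply, ZMod.toCircle_apply, zmodExp]

theorem conj_zmodExp {r : ℕ} [NeZero r] (n : ZMod r) :
    (starRingEnd ℂ) (zmodExp r n) = zmodExp r (-n) := by
  rw [zmodExp_eq_stdAddChar, zmodExp_eq_stdAddChar, ZMod.stdAddChar_apply, ZMod.stdAddChar_apply,
    AddChar.map_neg_eq_inv, Circle.coe_inv_eq_conj]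

section

variable {r : ℕ} {F : Type*} [Field F] [Algebra (ZMod r) F] (u : F) (m : ZMod r)

theorem sSum_summand_periodic {k : ℕ} (hrk : r + 1 = 2 * k) (hu : u ^ (r + 1) = 1) :
    Function.Periodic
      (fun j => (-1 : ℂ) ^ j * zmodExp r (m * Algebra.trace (ZMod r) F (u ^ j))) (r + 1) := by
  intro j
  dsimp only
  rw [pow_add u, hu, mul_one, pow_add (-1 : ℂ), hrk, pow_mul, neg_one_sq, one_pow, mul_one]

theorem conj_sSum_summand [NeZero r] {k : ℕ} (hk : u ^ k = -1) (j : ℕ) :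
    (starRingEnd ℂ) ((-1 : ℂ) ^ j * zmodExp r (m * Algebra.trace (ZMod r) F (u ^ j))) =
      (-1 : ℂ) ^ k *
        ((-1 : ℂ) ^ (j + k) * zmodExp r (m * Algebra.trace (ZMod r) F (u ^ (j + k)))) := by
  rw [map_mul, conj_zmodExp, pow_add u, hk, mul_neg_one, map_neg, mul_neg, map_pow, map_neg,
    map_one, ← mul_assoc, ← pow_add, add_comm k, add_assoc, pow_add _ j, ← two_mul, pow_mul,
    neg_one_sq, one_pow, mul_one]

theorem conj_sSum [NeZero r] [Fintype F] {k : ℕ} (hrk : r + 1 = 2 * k) (hu : orderOf u = r + 1) :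
    (starRingEnd ℂ) (sSum r u m) = (-1 : ℂ) ^ k * sSum r u m := by
  have huk : u ^ k = -1 := pow_eq_neg_one_of_orderOf_eq_two_mul (by omega) (hu.trans hrk)
  have hper := sSum_summand_periodic u m hrk (hu ▸ pow_orderOf_eq_one u)
  rw [sSum, map_sum, ← hper.sum_range_comp_add_right k, mul_sum]
  exact sum_congr rfl fun j _ => conj_sSum_summand u m huk j

end

theorem stmt4_general (r : ℕ) (hodd : Odd r)
    (F : Type*) [Field F] [Fintype F] [Algebra (ZMod r) F]
    (u : F) (hu : orderOf u = r + 1) (m : ZMod r) :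
    (r % 4 = 1 → (starRingEnd ℂ) (sSum r u m) = -sSum r u m) ∧
    (r % 4 = 3 → (starRingEnd ℂ) (sSum r u m) = sSum r u m) := by
  have : NeZero r := ⟨hodd.pos.ne'⟩
  obtain ⟨a, rfl⟩ := hodd
  have hconj := conj_sSum u m (k := a + 1) (by ring) hu
  refine ⟨fun h4 => ?_, fun h4 => ?_⟩
  · rwa [Odd.neg_one_pow ⟨a / 2, by omega⟩, neg_one_mul] at hconj
  · rwa [Even.neg_one_pow ⟨(a + 1) / 2, by omega⟩, one_mul] at hconj

/-- If `r ≡ 1 (mod 4)` then `s(m)` is purely imaginary (`conj s(m) = −s(m)`);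
if `r ≡ 3 (mod 4)` then `s(m)` is real (`conj s(m) = s(m)`). -/
theorem stmt4 (r : ℕ) (hr : r.Prime) (hodd : Odd r) (h3 : r % 3 = 2)
    (F : Type*) [Field F] [Fintype F] [Algebra (ZMod r) F]
    (hcard : Fintype.card F = r ^ 2)
    (u : F) (hu : orderOf u = r + 1) (m : ZMod r) :
    (r % 4 = 1 → (starRingEnd ℂ) (sSum r u m) = -sSum r u m) ∧
    (r % 4 = 3 → (starRingEnd ℂ) (sSum r u m) = sSum r u m) :=
  stmt4_general r hodd F u hu m
end

section
/- Let a, b ∈ ZMod r, not both zero, and set α := a − b·ω ∈ F (a, b viewed in F via the algebra map). Then α ≠ 0, a² + a·b + b² ≠ 0 in ZMod r, and Tr(α^{r−1}) = 3·a·(a+b)·(a² + a·b + b²)⁻¹ − 1 in ZMod r. -/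
/-!
Since `r ≡ 2 (mod 3)`, the polynomial `X² + X + 1` has no root in `ZMod r`, so the norm form
`a² + ab + b²` is anisotropic. As `ω^r = ω²`, the Frobenius sends `α = a - bω` to its conjugate
`ᾱ = a + b + bω`, with `α + ᾱ = 2a + b` and `αᾱ = a² + ab + b²`; in particular `α ≠ 0`. The trace of
the quadratic extension is `x + x^r`, so `Tr(α^(r-1)) = ᾱ/α + α/ᾱ = ((α + ᾱ)² - 2αᾱ)/(αᾱ)`.
-/

theorem sq_add_add_one_ne_zero_of_card_mod_three {K : Type*} [Field K] [Fintype K]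
    (hK : Fintype.card K % 3 = 2) (t : K) : t ^ 2 + t + 1 ≠ 0 := by
  intro ht
  obtain ⟨m, hm⟩ : ∃ m, Fintype.card K = 3 * m + 2 := ⟨Fintype.card K / 3, by omega⟩
  have ht0 : t ≠ 0 := by rintro rfl; simp at ht
  -- `t ^ 3 = 1` and `t ^ (3m + 1) = 1` force `t = 1`, and then `3 = 0` contradicts `q = 3m + 2 = 0`.
  have ht1 : t = 1 := by
    have h := FiniteField.pow_card_sub_one_eq_one t ht0
    rwa [hm, show 3 * m + 2 - 1 = 3 * m + 1 by omega, pow_succ, pow_mul,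
      show t ^ 3 = 1 by linear_combination (t - 1) * ht, one_pow, one_mul] at h
  subst ht1
  have hq := FiniteField.cast_card_eq_zero K
  rw [hm] at hq
  push_cast at hq
  exact one_ne_zero (by linear_combination (m + 1 : K) * ht - hq : (1 : K) = 0)

theorem sq_add_mul_add_sq_ne_zero {K : Type*} [Field K] (hK : ∀ t : K, t ^ 2 + t + 1 ≠ 0)
    {a b : K} (hab : ¬(a = 0 ∧ b = 0)) : a ^ 2 + a * b + b ^ 2 ≠ 0 := by
  intro h
  by_cases hb : b = 0
  · subst hb
    exact hab ⟨pow_eq_zero_iff two_ne_zero |>.mp (by linear_combination h), rfl⟩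
  · exact hK (a / b) (by field_simp; linear_combination h)

theorem FiniteField.algebraMap_trace_eq_add_pow {K L : Type*} [Field K] [Field L] [Finite L]
    [Algebra K L] (h : Module.finrank K L = 2) (x : L) :
    algebraMap K L (Algebra.trace K L x) = x + x ^ Nat.card K := by
  rw [FiniteField.algebraMap_trace_eq_sum_pow, h, Finset.sum_range_succ, Finset.sum_range_one,
    pow_zero, pow_one, pow_one]

theorem pow_sub_one_add_pow_sub_one_pow {K : Type*} [Field K] {x : K} (hx : x ≠ 0) {n : ℕ}
    (hn : 1 ≤ n) (hxn : (x ^ n) ^ n = x) :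
    x ^ (n - 1) + (x ^ (n - 1)) ^ n = (x ^ 2 + (x ^ n) ^ 2) / (x * x ^ n) := by
  have hxn0 : x ^ n ≠ 0 := pow_ne_zero n hx
  have h1 : x ^ (n - 1) = x ^ n / x := by
    rw [eq_div_iff hx, ← pow_succ, Nat.sub_add_cancel hn]
  rw [h1, div_pow, hxn]
  field_simp
  ring

theorem pow_eq_sq_of_sq_add_add_one_eq_zero {R : Type*} [CommRing R] {ω : R}
    (hω : ω ^ 2 + ω + 1 = 0) {n : ℕ} (hn : n % 3 = 2) : ω ^ n = ω ^ 2 := by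
  rw [← Nat.div_add_mod n 3, hn, pow_add, pow_mul,
    show ω ^ 3 = 1 by linear_combination (ω - 1) * hω, one_pow, one_mul]

theorem sub_mul_pow_char_eq {p : ℕ} [Fact p.Prime] {F : Type*} [Field F] [Algebra (ZMod p) F]
    {ω : F} (hω : ω ^ 2 + ω + 1 = 0) (hp : p % 3 = 2) (a b : ZMod p) :
    (algebraMap (ZMod p) F a - algebraMap (ZMod p) F b * ω) ^ p =
      algebraMap (ZMod p) F a + algebraMap (ZMod p) F b + algebraMap (ZMod p) F b * ω := by
  have : CharP F p := charP_of_injective_algebraMap (algebraMap (ZMod p) F).injective p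
  rw [sub_pow_char, mul_pow, ← map_pow, ← map_pow, ZMod.pow_card, ZMod.pow_card,
    pow_eq_sq_of_sq_add_add_one_eq_zero hω hp]
  linear_combination (-algebraMap (ZMod p) F b) * hω

theorem stmt5_general (r : ℕ) (hr : r.Prime) (h3 : r % 3 = 2)
    (F : Type*) [Field F] [Fintype F] [Algebra (ZMod r) F]
    (hcard : Fintype.card F = r ^ 2)
    (ω : F) (hω : ω ^ 2 + ω + 1 = 0)
    (a b : ZMod r) (hab : ¬(a = 0 ∧ b = 0))
    (α : F) (hα : α = algebraMap (ZMod r) F a - algebraMap (ZMod r) F b * ω) :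
    α ≠ 0 ∧ a ^ 2 + a * b + b ^ 2 ≠ 0 ∧
      Algebra.trace (ZMod r) F (α ^ (r - 1)) =
        3 * a * (a + b) * (a ^ 2 + a * b + b ^ 2)⁻¹ - 1 := by
  have : Fact r.Prime := ⟨hr⟩
  set φ := algebraMap (ZMod r) F
  have hN : a ^ 2 + a * b + b ^ 2 ≠ 0 :=
    sq_add_mul_add_sq_ne_zero (sq_add_add_one_ne_zero_of_card_mod_three (by rwa [ZMod.card])) hab
  have hconj : α ^ r = φ a + φ b + φ b * ω := hα ▸ sub_mul_pow_char_eq hω h3 a b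
  have hsum : α + α ^ r = φ (2 * a + b) := by
    rw [hconj, hα]; simp only [map_add, map_mul, map_ofNat]; ring
  have hprod : α * α ^ r = φ (a ^ 2 + a * b + b ^ 2) := by
    rw [hconj, hα]; simp only [map_add, map_mul, map_pow]
    linear_combination (-φ b ^ 2) * hω
  have hα0 : α ≠ 0 := left_ne_zero_of_mul (hprod ▸ (map_ne_zero φ).2 hN)
  have hfinrank : Module.finrank (ZMod r) F = 2 :=
    Nat.pow_right_injective hr.two_le
      (show r ^ _ = r ^ 2 by rw [FiniteField.pow_finrank_eq_card, hcard])
  have hconj_conj : (α ^ r) ^ r = α := by rw [← pow_mul, ← sq, ← hcard, FiniteField.pow_card]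
  refine ⟨hα0, hN, φ.injective ?_⟩
  rw [FiniteField.algebraMap_trace_eq_add_pow hfinrank, Nat.card_zmod,
    pow_sub_one_add_pow_sub_one_pow hα0 hr.one_le hconj_conj,
    show α ^ 2 + (α ^ r) ^ 2 = (α + α ^ r) ^ 2 - α * α ^ r - α * α ^ r by ring, hsum, hprod,
    ← map_pow, ← map_sub, ← map_sub, ← map_div₀, div_eq_mul_inv]
  congr 1
  linear_combination (-1 : ZMod r) * mul_inv_cancel₀ hN

/-- For `a, b ∈ ZMod r` not both zero and `α = a − b·ω` (where `ω² + ω + 1 = 0` in `F`),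
we have `α ≠ 0`, `a² + ab + b² ≠ 0`, and
`Tr(α^{r−1}) = 3a(a+b)·(a² + ab + b²)⁻¹ − 1`. -/
theorem stmt5 (r : ℕ) (hr : r.Prime) (hodd : Odd r) (h3 : r % 3 = 2)
    (F : Type*) [Field F] [Fintype F] [Algebra (ZMod r) F]
    (hcard : Fintype.card F = r ^ 2)
    (ω : F) (hω : ω ^ 2 + ω + 1 = 0)
    (a b : ZMod r) (hab : ¬(a = 0 ∧ b = 0))
    (α : F) (hα : α = algebraMap (ZMod r) F a - algebraMap (ZMod r) F b * ω) :
    α ≠ 0 ∧ a ^ 2 + a * b + b ^ 2 ≠ 0 ∧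
      Algebra.trace (ZMod r) F (α ^ (r - 1)) =
        3 * a * (a + b) * (a ^ 2 + a * b + b ^ 2)⁻¹ - 1 :=
  stmt5_general r hr h3 F hcard ω hω a b hab α hα
end

section
/- Let a, b ∈ ZMod r, not both zero, and set α := a − b·ω ∈ F (a, b viewed in F via the algebra map). Then Tr(α^{2(r−1)}) − Tr(α^{r−1}) = −9·a·(a+b)·b²·((a² + a·b + b²)²)⁻¹ in ZMod r. -/
/-!
The Frobenius `x ↦ x ^ r` generates `Gal(F / 𝔽_r)`, so `Tr x = x + x ^ r`, and it maps
`α = a - bω` to its conjugate `β = (a + b) + bω` because `ω ^ r = ω² = -1 - ω`. Hence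
`α ^ (r - 1) = β / α` and `β ^ (r - 1) = α / β`, and the difference of traces is a rational
function of `s = α + β = 2a + b` and `n = αβ = a² + ab + b²`, namely
`(s² - n)(s² - 4n) / n² = 3a(a + b) · (-3b²) / n²`. Since `r ≡ 2 (mod 3)`, `x² + x + 1` has no
root in `𝔽_r`, so `n ≠ 0` (and `α ≠ 0`).
-/

theorem ZMod.sq_add_add_one_ne_zero {p : ℕ} [Fact p.Prime] (hp : p % 3 = 2) (x : ZMod p) :
    x ^ 2 + x + 1 ≠ 0 := by
  intro hx
  have hx0 : x ≠ 0 := by rintro rfl; simp at hx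
  have hx1 : x ≠ 1 := by
    rintro rfl
    have h3 : ((3 : ℕ) : ZMod p) = 0 := by push_cast; linear_combination hx
    rw [ZMod.natCast_eq_zero_iff,
      Nat.dvd_prime_two_le Nat.prime_three (Fact.out : p.Prime).two_le] at h3
    omega
  have hord : orderOf x = 3 := orderOf_eq_prime (by linear_combination (x - 1) * hx) hx1
  have := hord ▸ ZMod.orderOf_dvd_card_sub_one hx0
  omega

theorem ZMod.sq_add_mul_add_sq_ne_zero {p : ℕ} [Fact p.Prime] (hp : p % 3 = 2) {a b : ZMod p}
    (hab : ¬(a = 0 ∧ b = 0)) : a ^ 2 + a * b + b ^ 2 ≠ 0 := by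
  by_cases hb : b = 0
  · simp_all
  · have := ZMod.sq_add_add_one_ne_zero hp (a / b)
    contrapose! this
    field_simp
    linear_combination this

theorem FiniteField.algebraMap_trace_eq_add_pow_s6 {p : ℕ} [Fact p.Prime] {F : Type*} [Field F]
    [Fintype F] [Algebra (ZMod p) F] (hF : Fintype.card F = p ^ 2) (x : F) :
    algebraMap (ZMod p) F (Algebra.trace (ZMod p) F x) = x + x ^ p := by
  have hdeg : Module.finrank (ZMod p) F = 2 := by
    rw [Module.card_eq_pow_finrank (K := ZMod p), ZMod.card] at hF
    exact Nat.pow_right_injective (Fact.out : p.Prime).two_le hF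
  simp [FiniteField.algebraMap_trace_eq_sum_pow, hdeg, Finset.sum_range_succ]

theorem sub_mul_pow_char_of_sq_add_add_one_eq_zero {p : ℕ} [Fact p.Prime] (hp : p % 3 = 2)
    {F : Type*} [Field F] [Algebra (ZMod p) F] {ω : F} (hω : ω ^ 2 + ω + 1 = 0) (a b : ZMod p) :
    (algebraMap (ZMod p) F a - algebraMap (ZMod p) F b * ω) ^ p =
      algebraMap (ZMod p) F (a + b) + algebraMap (ZMod p) F b * ω := by
  have := charP_of_injective_algebraMap (algebraMap (ZMod p) F).injective p
  rw [sub_pow_char, mul_pow, ← map_pow, ← map_pow, ZMod.pow_card, ZMod.pow_card,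
    pow_eq_sq_of_sq_add_add_one_eq_zero hω hp, map_add]
  linear_combination -algebraMap (ZMod p) F b * hω

theorem div_add_div_sq_sub_div_add_div {K : Type*} [Field K] {x y : K} (hx : x ≠ 0)
    (hy : y ≠ 0) :
    ((y / x) ^ 2 + (x / y) ^ 2) - (y / x + x / y) =
      ((x + y) ^ 2 - x * y) * ((x + y) ^ 2 - 4 * (x * y)) / (x * y) ^ 2 := by
  field_simp
  ring

theorem FiniteField.algebraMap_trace_pow_two_mul_pred_sub_trace_pow_pred {p : ℕ} [Fact p.Prime]
    {F : Type*} [Field F] [Fintype F] [Algebra (ZMod p) F] (hF : Fintype.card F = p ^ 2)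
    {x : F} (hx : x ≠ 0) :
    algebraMap (ZMod p) F
        (Algebra.trace (ZMod p) F (x ^ (2 * (p - 1))) - Algebra.trace (ZMod p) F (x ^ (p - 1))) =
      ((x + x ^ p) ^ 2 - x * x ^ p) * ((x + x ^ p) ^ 2 - 4 * (x * x ^ p)) / (x * x ^ p) ^ 2 := by
  have hp : 1 ≤ p := (Fact.out : p.Prime).one_le
  have hxp : x ^ p ≠ 0 := pow_ne_zero _ hx
  have hconj : (x ^ p) ^ p = x := by rw [← pow_mul, ← sq, ← hF, FiniteField.pow_card]
  have hpred : x ^ (p - 1) = x ^ p / x := by rw [eq_div_iff hx, ← pow_succ, Nat.sub_add_cancel hp]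
  have hpred_conj : (x ^ (p - 1)) ^ p = x / x ^ p := by
    rw [← pow_mul, mul_comm, pow_mul, eq_div_iff hxp, ← pow_succ, Nat.sub_add_cancel hp, hconj]
  rw [map_sub, FiniteField.algebraMap_trace_eq_add_pow_s6 hF,
    FiniteField.algebraMap_trace_eq_add_pow_s6 hF,
    mul_comm 2, pow_mul, pow_right_comm _ 2 p, hpred_conj, hpred,
    ← div_add_div_sq_sub_div_add_div hx hxp]

theorem stmt6_general (r : ℕ) (hr : r.Prime) (h3 : r % 3 = 2)
    (F : Type*) [Field F] [Fintype F] [Algebra (ZMod r) F]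
    (hcard : Fintype.card F = r ^ 2)
    (ω : F) (hω : ω ^ 2 + ω + 1 = 0)
    (a b : ZMod r) (hab : ¬(a = 0 ∧ b = 0))
    (α : F) (hα : α = algebraMap (ZMod r) F a - algebraMap (ZMod r) F b * ω) :
    Algebra.trace (ZMod r) F (α ^ (2 * (r - 1))) - Algebra.trace (ZMod r) F (α ^ (r - 1)) =
      -9 * a * (a + b) * b ^ 2 * ((a ^ 2 + a * b + b ^ 2) ^ 2)⁻¹ := by
  have : Fact r.Prime := ⟨hr⟩
  have hN : a ^ 2 + a * b + b ^ 2 ≠ 0 := ZMod.sq_add_mul_add_sq_ne_zero h3 hab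
  have hconj : α ^ r = algebraMap (ZMod r) F (a + b) + algebraMap (ZMod r) F b * ω :=
    hα ▸ sub_mul_pow_char_of_sq_add_add_one_eq_zero h3 hω a b
  have hsum : α + α ^ r = algebraMap (ZMod r) F (2 * a + b) := by
    rw [hconj, hα]
    simp only [map_add, map_mul, map_ofNat]
    ring
  have hprod : α * α ^ r = algebraMap (ZMod r) F (a ^ 2 + a * b + b ^ 2) := by
    rw [hconj, hα]
    simp only [map_add, map_mul, map_pow]
    linear_combination -algebraMap (ZMod r) F b ^ 2 * hω
  have hα0 : α ≠ 0 := by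
    rintro rfl
    rw [zero_mul, eq_comm, map_eq_zero] at hprod
    exact hN hprod
  apply (algebraMap (ZMod r) F).injective
  rw [FiniteField.algebraMap_trace_pow_two_mul_pred_sub_trace_pow_pred hcard hα0, hsum, hprod]
  have hN' : algebraMap (ZMod r) F (a ^ 2 + a * b + b ^ 2) ≠ 0 := by rwa [map_ne_zero]
  simp only [map_mul, map_inv₀, map_pow, map_neg, map_ofNat, map_add] at hN' ⊢
  field_simp
  ring

/-- For `a, b ∈ ZMod r` not both zero and `α = a − b·ω` (where `ω² + ω + 1 = 0` in `F`),
`Tr(α^{2(r−1)}) − Tr(α^{r−1}) = −9a(a+b)b²·((a² + ab + b²)²)⁻¹`. -/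
theorem stmt6 (r : ℕ) (hr : r.Prime) (hodd : Odd r) (h3 : r % 3 = 2)
    (F : Type*) [Field F] [Fintype F] [Algebra (ZMod r) F]
    (hcard : Fintype.card F = r ^ 2)
    (ω : F) (hω : ω ^ 2 + ω + 1 = 0)
    (a b : ZMod r) (hab : ¬(a = 0 ∧ b = 0))
    (α : F) (hα : α = algebraMap (ZMod r) F a - algebraMap (ZMod r) F b * ω) :
    Algebra.trace (ZMod r) F (α ^ (2 * (r - 1))) - Algebra.trace (ZMod r) F (α ^ (r - 1)) =
      -9 * a * (a + b) * b ^ 2 * ((a ^ 2 + a * b + b ^ 2) ^ 2)⁻¹ :=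
  stmt6_general r hr h3 F hcard ω hω a b hab α hα
end

section
/- Equation (s1) of the paper: s(1) = (r−1)⁻¹ · ∑_{α ∈ F, α ≠ 0} ( ζ^{Tr(α^{2(r−1)})} − ζ^{Tr(α^{r−1})} ), as an identity of complex numbers. -/
/-!
Write `G x = ζ ^ Tr x`. The map `α ↦ α ^ (r - 1)` sends the cyclic group `F^×` of order
`(r - 1)(r + 1)` onto the `(r + 1)`-st roots of unity, i.e. the powers of `u`, with all fibres
of size `r - 1`; so the right-hand side is `∑_j G ((u ^ j) ^ 2) - ∑_j G (u ^ j)`. Since `r + 1`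
is even, `(-1) ^ j = 2 · [j even] - 1`, and `j ↦ (u ^ j) ^ 2` hits every even power of `u`
exactly twice, so `s(1)` is the same difference.
-/

open Complex Finset

section RootsOfUnitySums

variable {M : Type*} [AddCommMonoid M]

theorem IsPrimitiveRoot.sum_range_pow_eq_sum_nthRootsFinset {R : Type*} [CommRing R] [IsDomain R]
    {u : R} {n : ℕ} (hu : IsPrimitiveRoot u n) (f : R → M) :
    ∑ j ∈ range n, f (u ^ j) = ∑ y ∈ Polynomial.nthRootsFinset n (1 : R), f y := by
  classical
  have himage : (range n).image (u ^ ·) = Polynomial.nthRootsFinset n (1 : R) := by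
    refine eq_of_subset_of_card_le (fun y hy => ?_) ?_
    · obtain ⟨j, -, rfl⟩ := mem_image.mp hy
      rcases n.eq_zero_or_pos with rfl | hn
      · simp at hy
      rw [Polynomial.mem_nthRootsFinset hn, pow_right_comm, hu.pow_eq_one, one_pow]
    · rw [card_image_of_injOn hu.injOn_pow, card_range, hu.card_nthRootsFinset]
  rw [← himage, sum_image hu.injOn_pow]

theorem sum_range_mul_pow_eq_nsmul {G : Type*} [Monoid G] {v : G} {n : ℕ} (hv : v ^ n = 1)
    (k : ℕ) (f : G → M) :
    ∑ i ∈ range (k * n), f (v ^ i) = k • ∑ i ∈ range n, f (v ^ i) := by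
  induction k with
  | zero => simp
  | succ k ih =>
    simp only [add_mul, one_mul, sum_range_add, ih, pow_add, pow_mul', hv, one_pow, one_mul,
      succ_nsmul]

theorem FiniteField.filter_ne_zero_eq_nthRootsFinset (F : Type*) [Field F] [Fintype F]
    [DecidableEq F] :
    univ.filter (· ≠ (0 : F)) = Polynomial.nthRootsFinset (Fintype.card F - 1) (1 : F) := by
  have hq : 0 < Fintype.card F - 1 := Nat.sub_pos_of_lt Fintype.one_lt_card
  ext α
  rw [mem_filter, Polynomial.mem_nthRootsFinset hq]
  refine ⟨fun h => FiniteField.pow_card_sub_one_eq_one α h.2, fun h => ⟨mem_univ _, ?_⟩⟩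
  rintro rfl
  simp [zero_pow hq.ne'] at h

theorem FiniteField.exists_isPrimitiveRoot_card_sub_one (F : Type*) [Field F] [Fintype F] :
    ∃ z : F, IsPrimitiveRoot z (Fintype.card F - 1) := by
  classical
  obtain ⟨z, hz⟩ := IsCyclic.exists_ofOrder_eq_natCard (α := Fˣ)
  rw [Nat.card_eq_fintype_card, Fintype.card_units] at hz
  exact ⟨z, hz ▸ orderOf_units (y := z) ▸ IsPrimitiveRoot.orderOf (z : F)⟩

theorem FiniteField.sum_filter_ne_zero_pow_eq_nsmul {F : Type*} [Field F] [Fintype F]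
    [DecidableEq F] {k n : ℕ} (hcard : Fintype.card F = k * n + 1) {u : F}
    (hu : IsPrimitiveRoot u n) (f : F → M) :
    ∑ α ∈ univ.filter (· ≠ 0), f (α ^ k) = k • ∑ j ∈ range n, f (u ^ j) := by
  obtain ⟨z, hz⟩ := FiniteField.exists_isPrimitiveRoot_card_sub_one F
  rw [hcard, Nat.add_sub_cancel] at hz
  have hzk : IsPrimitiveRoot (z ^ k) n := hz.pow (by linarith [Fintype.one_lt_card (α := F)]) rfl
  rw [FiniteField.filter_ne_zero_eq_nthRootsFinset, hcard, Nat.add_sub_cancel,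
    ← hz.sum_range_pow_eq_sum_nthRootsFinset, hu.sum_range_pow_eq_sum_nthRootsFinset,
    ← hzk.sum_range_pow_eq_sum_nthRootsFinset, ← sum_range_mul_pow_eq_nsmul hzk.pow_eq_one]
  simp only [pow_right_comm]

end RootsOfUnitySums

theorem sum_range_two_mul_neg_one_pow_mul_add {R : Type*} [CommRing R] (h : ℕ → R) (m : ℕ) :
    ∑ j ∈ range (2 * m), (-1) ^ j * h j + ∑ j ∈ range (2 * m), h j =
      2 * ∑ i ∈ range m, h (2 * i) := by
  induction m with
  | zero => simp
  | succ m ih =>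
    rw [mul_add_one, sum_range_succ, sum_range_succ, sum_range_succ, sum_range_succ, pow_succ,
      pow_mul, neg_one_sq, one_pow, sum_range_succ _ m, mul_add, ← ih]
    ring

theorem sum_range_neg_one_pow_mul_eq_sub {G R : Type*} [Monoid G] [CommRing R] {u : G} {m : ℕ}
    (hu : u ^ (2 * m) = 1) (g : G → R) :
    ∑ j ∈ range (2 * m), (-1) ^ j * g (u ^ j) =
      ∑ j ∈ range (2 * m), g ((u ^ j) ^ 2) - ∑ j ∈ range (2 * m), g (u ^ j) := by
  have hsq : ∑ j ∈ range (2 * m), g ((u ^ j) ^ 2) = 2 * ∑ i ∈ range m, g (u ^ (2 * i)) := by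
    simp only [pow_right_comm _ _ 2, pow_mul u 2]
    rw [sum_range_mul_pow_eq_nsmul (by rwa [← pow_mul]) 2, nsmul_eq_mul, Nat.cast_ofNat]
  rw [eq_sub_iff_add_eq, sum_range_two_mul_neg_one_pow_mul_add (fun j => g (u ^ j)), hsq]

open scoped Classical

theorem stmt7_general (r : ℕ) (hodd : Odd r)
    (F : Type*) [Field F] [Fintype F] [Algebra (ZMod r) F]
    (hcard : Fintype.card F = r ^ 2)
    (u : F) (hu : orderOf u = r + 1) :
    sSum r u 1 = ((r : ℂ) - 1)⁻¹ *
      ∑ α ∈ Finset.univ.filter (fun α : F => α ≠ 0),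
        (zmodExp r (Algebra.trace (ZMod r) F (α ^ (2 * (r - 1)))) -
          zmodExp r (Algebra.trace (ZMod r) F (α ^ (r - 1)))) := by
  have hr : 1 < r := by
    have := hcard ▸ Fintype.one_lt_card (α := F)
    nlinarith
  obtain ⟨k, hk⟩ : ∃ k, r + 1 = 2 * k := ⟨(r + 1) / 2, by obtain ⟨j, rfl⟩ := hodd; omega⟩
  have hcard' : Fintype.card F = (r - 1) * (r + 1) + 1 := by
    obtain ⟨s, rfl⟩ : ∃ s, r = s + 1 := ⟨r - 1, by omega⟩
    rw [hcard, Nat.add_sub_cancel]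
    ring
  have hprim : IsPrimitiveRoot u (r + 1) := hu ▸ IsPrimitiveRoot.orderOf u
  set G : F → ℂ := fun x => zmodExp r (Algebra.trace (ZMod r) F x)
  have hs : sSum r u 1 = ∑ j ∈ range (r + 1), (-1) ^ j * G (u ^ j) := by
    simp only [sSum, one_mul, G]
  have hpow (α : F) : α ^ (2 * (r - 1)) = (α ^ (r - 1)) ^ 2 := by rw [← pow_mul, mul_comm]
  simp only [hpow]
  rw [hs, hk, sum_range_neg_one_pow_mul_eq_sub (hk ▸ hprim.pow_eq_one), ← hk, sum_sub_distrib,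
    FiniteField.sum_filter_ne_zero_pow_eq_nsmul hcard' hprim (fun x => G (x ^ 2)),
    FiniteField.sum_filter_ne_zero_pow_eq_nsmul hcard' hprim G, ← smul_sub, nsmul_eq_mul,
    Nat.cast_sub hr.le, Nat.cast_one,
    inv_mul_cancel_left₀ (sub_ne_zero.mpr (by exact_mod_cast hr.ne'))]

/-- Equation (s1): `s(1) = (r−1)⁻¹ · ∑_{α ≠ 0} (ζ^{Tr(α^{2(r−1)})} − ζ^{Tr(α^{r−1})})`. -/
theorem stmt7 (r : ℕ) (hr : r.Prime) (hodd : Odd r) (h3 : r % 3 = 2)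
    (F : Type*) [Field F] [Fintype F] [Algebra (ZMod r) F]
    (hcard : Fintype.card F = r ^ 2)
    (u : F) (hu : orderOf u = r + 1) :
    sSum r u 1 = ((r : ℂ) - 1)⁻¹ *
      ∑ α ∈ Finset.univ.filter (fun α : F => α ≠ 0),
        (zmodExp r (Algebra.trace (ZMod r) F (α ^ (2 * (r - 1)))) -
          zmodExp r (Algebra.trace (ZMod r) F (α ^ (r - 1)))) :=
  stmt7_general r hodd F hcard u hu
end

section
/- Jacobsthal's identity (Lemma 4.4 of the paper): for all a, b ∈ ZMod r, ∑_{x ∈ ZMod r} χ(x)·χ(x² + a·x + b) = ∑_{x ∈ ZMod r} χ(x + a)·χ(x² − 4·b), as an identity of integers. -/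
/-!
Double counting: `χ(t² - 4b) + 1` is the number of roots of `X² - tX + b`, and `∑ₜ χ(t + a) = 0`,
so the right-hand side counts pairs `(x, t)` with `x² - tx + b = 0`, weighted by `χ(t + a)`.
Summing over `x` first, each `x ≠ 0` is a root for exactly `t = x + b/x`, where
`χ(t + a) = χ(x) χ(x² + ax + b)`, while `x = 0` contributes `[b = 0] ∑ₜ χ(t + a) = 0`.
-/

open Finset

open scoped Classical

/-- The quadratic character of `ZMod r` with values in `ℤ`:
`χ(m) = 1` if `m` is a nonzero square, `−1` if `m` is a nonsquare, `χ(0) = 0`. -/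
noncomputable def chi (r : ℕ) (m : ZMod r) : ℤ :=
  if m = 0 then 0 else if IsSquare m then 1 else -1

section Jacobsthal

variable {F : Type*} [Field F] [Fintype F] [DecidableEq F]

theorem sum_quadraticChar_add_eq_zero (hF : ringChar F ≠ 2) (a : F) :
    ∑ t : F, quadraticChar F (t + a) = 0 := by
  rw [← quadraticChar_sum_zero hF]
  exact Fintype.sum_equiv (Equiv.addRight a) _ _ fun _ => rfl

/-- `x ↦ 2x - t` completes the square, matching the roots of `x² - tx + b` with the square roots
of its discriminant. -/
theorem quadraticChar_card_roots_quadratic (hF : ringChar F ≠ 2) (t b : F) :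
    (#{x : F | x ^ 2 - t * x + b = 0} : ℤ) = quadraticChar F (t ^ 2 - 4 * b) + 1 := by
  have h2 : (2 : F) ≠ 0 := Ring.two_ne_zero hF
  rw [← quadraticChar_card_sqrts hF, Set.toFinset_ofPred]
  congr 1
  refine card_nbij' (fun x => 2 * x - t) (fun y => (y + t) / 2) ?_ ?_ ?_ ?_
  · intro x hx
    simp only [coe_filter, mem_univ, true_and, Set.mem_ofPred_eq] at hx ⊢
    linear_combination 4 * hx
  · intro y hy
    simp only [coe_filter, mem_univ, true_and, Set.mem_ofPred_eq] at hy ⊢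
    field_simp
    linear_combination hy
  · intro x _
    field_simp
    ring
  · intro y _
    field_simp
    ring

/-- For `x ≠ 0` the only `t` with `x² - tx + b = 0` is `t = (x² + b)/x`, and then
`x² + ax + b = x (t + a)`. -/
theorem sum_quadraticChar_add_of_root (hF : ringChar F ≠ 2) (a b x : F) :
    ∑ t : F, (if x ^ 2 - t * x + b = 0 then quadraticChar F (t + a) else 0) =
      quadraticChar F x * quadraticChar F (x ^ 2 + a * x + b) := by
  rcases eq_or_ne x 0 with rfl | hx
  · simp only [zero_pow two_ne_zero, mul_zero, sub_zero, zero_add, quadraticChar_zero, zero_mul]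
    by_cases hb : b = 0
    · simp only [hb, if_true, sum_quadraticChar_add_eq_zero hF]
    · simp only [hb, if_false, sum_const_zero]
  have hroot : ∀ t : F, x ^ 2 - t * x + b = 0 ↔ t = (x ^ 2 + b) / x := fun t => by
    rw [eq_div_iff hx]
    constructor <;> intro h <;> linear_combination -h
  have hfactor : x ^ 2 + a * x + b = x * ((x ^ 2 + b) / x + a) := by
    field_simp
    ring
  simp_rw [hroot, sum_ite_eq', mem_univ, if_true]
  rw [hfactor, map_mul, ← mul_assoc, ← sq, quadraticChar_sq_one hx, one_mul]

theorem quadraticChar_jacobsthal (hF : ringChar F ≠ 2) (a b : F) :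
    ∑ x : F, quadraticChar F x * quadraticChar F (x ^ 2 + a * x + b) =
      ∑ x : F, quadraticChar F (x + a) * quadraticChar F (x ^ 2 - 4 * b) := by
  have hcount : ∀ t : F, quadraticChar F (t + a) * quadraticChar F (t ^ 2 - 4 * b) =
      ∑ x : F, (if x ^ 2 - t * x + b = 0 then quadraticChar F (t + a) else 0) -
        quadraticChar F (t + a) := fun t => by
    rw [← sum_filter, sum_const, nsmul_eq_mul, quadraticChar_card_roots_quadratic hF]
    ring
  simp_rw [hcount, sum_sub_distrib, sum_quadraticChar_add_eq_zero hF, sub_zero]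
  rw [sum_comm]
  simp_rw [sum_quadraticChar_add_of_root hF]

end Jacobsthal

theorem chi_eq_quadraticChar (r : ℕ) [Fact r.Prime] (m : ZMod r) :
    chi r m = quadraticChar (ZMod r) m := by
  simp only [chi, quadraticChar_apply, quadraticCharFun]
  congr

/-- Jacobsthal's identity (Lemma 4.4): for all `a, b ∈ ZMod r`,
`∑_x χ(x)·χ(x² + ax + b) = ∑_x χ(x + a)·χ(x² − 4b)`. -/
theorem stmt11 (r : ℕ) [NeZero r] (hr : r.Prime) (hodd : Odd r) (a b : ZMod r) :
    ∑ x : ZMod r, chi r x * chi r (x ^ 2 + a * x + b) =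
      ∑ x : ZMod r, chi r (x + a) * chi r (x ^ 2 - 4 * b) := by
  have : Fact r.Prime := ⟨hr⟩
  have hchar : ringChar (ZMod r) ≠ 2 := by
    rw [ZMod.ringChar_zmod_n]
    rintro rfl
    exact Nat.not_odd_iff_even.mpr even_two hodd
  simp only [chi_eq_quadraticChar]
  exact quadraticChar_jacobsthal hchar a b
end

section
/- Let i, j ∈ ZMod r with i ≠ 0, j ≠ i and j ≠ −i, and set b := 2(j−i)·(3i)⁻¹ (so b ≠ 0 and b ≠ −4/3) and c := 4·b⁻¹ + 3, all in ZMod r. Then χ(3·i·b) · ∑_{a ∈ ZMod r} χ( 2(j−i) + 3·i·((2a+1)·(a²+a+1)⁻¹)² ) = ∑_{x ∈ ZMod r} χ((x−3)² + 4·c·x) + ∑_{x ∈ ZMod r} χ(x)·χ((x−3)² + 4·c·x). -/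
/-! Multiplying the `a`-th summand by `χ(3ib)` turns it into `χ(f(u²))` with `u = 2a + 1` and
`f(x) = (x − 3)² + 4cx`, since the product of the two arguments is a nonzero square times
`f(u²)`. As `a ↦ 2a + 1` is a bijection, the left side is `∑ᵤ χ(f(u²))`, and since `x` has
`1 + χ(x)` square roots this is the right side. -/

open Finset

open scoped Classical

section FiniteField

variable {F : Type*} [Field F]

/-- With `u = 2a + 1` one has `4(a² + a + 1) = u² + 3`. -/
theorem mul_add_mul_sq_eq_sq_mul (h2 : (2 : F) ≠ 0) (t b a : F) (hb : b ≠ 0)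
    (ha : a ^ 2 + a + 1 ≠ 0) :
    t * b * (t * b + t * ((2 * a + 1) * (a ^ 2 + a + 1)⁻¹) ^ 2) =
      (t * b * (4 * (a ^ 2 + a + 1))⁻¹) ^ 2 *
        (((2 * a + 1) ^ 2 - 3) ^ 2 + 4 * (4 * b⁻¹ + 3) * (2 * a + 1) ^ 2) := by
  have h4 : (4 : F) ≠ 0 := by simpa [show (4 : F) = 2 ^ 2 by norm_num] using h2
  have ha' : a * (a + 1) + 1 ≠ 0 := by convert ha using 1; ring
  field_simp
  ring

variable [Fintype F]

/-- A root `a ≠ 1` would have order `3 ∤ |F| − 1`; the root `a = 1` would force `3 = 0`,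
whereas `|F| ≡ 2 (mod 3)` vanishes in `F`. -/
theorem sq_add_self_add_one_ne_zero (hF : Fintype.card F % 3 = 2) (a : F) :
    a ^ 2 + a + 1 ≠ 0 := by
  intro h
  by_cases ha1 : a = 1
  · have h3 : (3 : F) = 0 := by rw [ha1] at h; linear_combination h
    set m := Fintype.card F / 3
    have hcard : ((3 * m + 2 : ℕ) : F) = 0 := by
      rw [← hF, Nat.div_add_mod]; exact FiniteField.cast_card_eq_zero F
    push_cast at hcard
    have h10 : (1 : F) = 0 := by linear_combination ((m : F) + 1) * h3 - hcard
    exact one_ne_zero h10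
  · have ha0 : a ≠ 0 := by rintro rfl; simp at h
    have horder : orderOf a = 3 :=
      orderOf_eq_prime (by linear_combination (a - 1) * h) ha1
    have h3dvd : 3 ∣ Fintype.card F - 1 :=
      horder ▸ orderOf_dvd_of_pow_eq_one (FiniteField.pow_card_sub_one_eq_one a ha0)
    omega

theorem sum_comp_two_mul_add_one (hF : ringChar F ≠ 2) (G : F → ℤ) :
    ∑ a : F, G (2 * a + 1) = ∑ y : F, G y := by
  have h2 : (2 : F) ≠ 0 := Ring.two_ne_zero hF
  refine Fintype.sum_bijective _ (Finite.injective_iff_bijective.mp fun x y hxy => ?_) _ _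
    fun _ => rfl
  exact mul_left_cancel₀ h2 (by linear_combination hxy)

variable [DecidableEq F]

theorem sum_comp_sq_eq_sum_quadraticChar_add_one_mul (hF : ringChar F ≠ 2) (G : F → ℤ) :
    ∑ y : F, G (y ^ 2) = ∑ x : F, (quadraticChar F x + 1) * G x := by
  rw [← Finset.sum_fiberwise univ (fun y : F => y ^ 2) (fun y => G (y ^ 2))]
  refine Finset.sum_congr rfl fun x _ => ?_
  rw [Finset.sum_congr rfl fun y hy => by rw [(Finset.mem_filter.mp hy).2], Finset.sum_const,
    nsmul_eq_mul, ← quadraticChar_card_sqrts hF x, Set.toFinset_ofPred]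

theorem quadraticChar_mul_quadraticChar_add_mul_sq (hF : ringChar F ≠ 2) {t b : F}
    (ht : t ≠ 0) (hb : b ≠ 0) {a : F} (ha : a ^ 2 + a + 1 ≠ 0) :
    quadraticChar F (t * b) *
        quadraticChar F (t * b + t * ((2 * a + 1) * (a ^ 2 + a + 1)⁻¹) ^ 2) =
      quadraticChar F (((2 * a + 1) ^ 2 - 3) ^ 2 + 4 * (4 * b⁻¹ + 3) * (2 * a + 1) ^ 2) := by
  have h4 : (4 : F) ≠ 0 := by
    simpa [show (4 : F) = 2 ^ 2 by norm_num] using Ring.two_ne_zero hF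
  have hs : t * b * (4 * (a ^ 2 + a + 1))⁻¹ ≠ 0 := by positivity
  rw [← map_mul, mul_add_mul_sq_eq_sq_mul (Ring.two_ne_zero hF) t b a hb ha, map_mul,
    quadraticChar_sq_one' hs, one_mul]

theorem quadraticChar_mul_sum_quadraticChar_add_mul_sq (hF : ringChar F ≠ 2)
    (hF3 : Fintype.card F % 3 = 2) {t b : F} (ht : t ≠ 0) (hb : b ≠ 0) :
    quadraticChar F (t * b) *
        ∑ a : F, quadraticChar F (t * b + t * ((2 * a + 1) * (a ^ 2 + a + 1)⁻¹) ^ 2) =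
      (∑ x : F, quadraticChar F ((x - 3) ^ 2 + 4 * (4 * b⁻¹ + 3) * x)) +
        ∑ x : F, quadraticChar F x * quadraticChar F ((x - 3) ^ 2 + 4 * (4 * b⁻¹ + 3) * x) := by
  set Q : F → ℤ := fun x => quadraticChar F ((x - 3) ^ 2 + 4 * (4 * b⁻¹ + 3) * x)
  calc _ = ∑ a : F, Q ((2 * a + 1) ^ 2) := by
        rw [Finset.mul_sum]
        exact Finset.sum_congr rfl fun a _ => quadraticChar_mul_quadraticChar_add_mul_sq hF ht hb
          (sq_add_self_add_one_ne_zero hF3 a)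
    _ = ∑ x : F, (quadraticChar F x + 1) * Q x := by
        rw [sum_comp_two_mul_add_one hF (fun y => Q (y ^ 2)),
          sum_comp_sq_eq_sum_quadraticChar_add_one_mul hF]
    _ = _ := by
        rw [← Finset.sum_add_distrib]
        exact Finset.sum_congr rfl fun x _ => by ring

end FiniteField

theorem stmt14_general (r : ℕ) [NeZero r] (hr : r.Prime) (hodd : Odd r) (h3 : r % 3 = 2)
    (i j : ZMod r) (hi : i ≠ 0) (hji : j ≠ i)
    (b c : ZMod r) (hb : b = 2 * (j - i) * (3 * i)⁻¹) (hc : c = 4 * b⁻¹ + 3) :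
    chi r (3 * i * b) *
        ∑ a : ZMod r, chi r (2 * (j - i) + 3 * i * ((2 * a + 1) * (a ^ 2 + a + 1)⁻¹) ^ 2) =
      (∑ x : ZMod r, chi r ((x - 3) ^ 2 + 4 * c * x)) +
        ∑ x : ZMod r, chi r x * chi r ((x - 3) ^ 2 + 4 * c * x) := by
  have : Fact r.Prime := ⟨hr⟩
  have hchar : ringChar (ZMod r) ≠ 2 := by
    rw [ZMod.ringChar_zmod_n]; rintro rfl; exact Nat.not_odd_iff_even.mpr even_two hodd
  have hthree : (3 : ZMod r) ≠ 0 := by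
    intro h
    have := (ZMod.natCast_eq_zero_iff 3 r).mp (by exact_mod_cast h)
    have := (Nat.prime_dvd_prime_iff_eq hr Nat.prime_three).mp this
    omega
  have h3i : 3 * i ≠ 0 := mul_ne_zero hthree hi
  have hb0 : b ≠ 0 := hb ▸ mul_ne_zero (mul_ne_zero (Ring.two_ne_zero hchar)
    (sub_ne_zero.mpr hji)) (inv_ne_zero h3i)
  have hji_eq : 2 * (j - i) = 3 * i * b := by rw [hb]; field_simp
  simp only [chi_eq_quadraticChar, hji_eq, hc]
  exact quadraticChar_mul_sum_quadraticChar_add_mul_sq hchar (by rwa [ZMod.card]) h3i hb0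

/-- With `b = 2(j−i)(3i)⁻¹` and `c = 4b⁻¹ + 3`,
`χ(3ib)·∑_a χ(2(j−i) + 3i((2a+1)(a²+a+1)⁻¹)²)
  = ∑_x χ((x−3)² + 4cx) + ∑_x χ(x)·χ((x−3)² + 4cx)`. -/
theorem stmt14 (r : ℕ) [NeZero r] (hr : r.Prime) (hodd : Odd r) (h3 : r % 3 = 2)
    (i j : ZMod r) (hi : i ≠ 0) (hji : j ≠ i) (hji' : j ≠ -i)
    (b c : ZMod r) (hb : b = 2 * (j - i) * (3 * i)⁻¹) (hc : c = 4 * b⁻¹ + 3) :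
    chi r (3 * i * b) *
        ∑ a : ZMod r, chi r (2 * (j - i) + 3 * i * ((2 * a + 1) * (a ^ 2 + a + 1)⁻¹) ^ 2) =
      (∑ x : ZMod r, chi r ((x - 3) ^ 2 + 4 * c * x)) +
        ∑ x : ZMod r, chi r x * chi r ((x - 3) ^ 2 + 4 * c * x) :=
  stmt14_general r hr hodd h3 i j hi hji b c hb hc
end
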